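/- arXiv:1210.2491 — 2 statements merged into one kernel-verified Lean document; each statement's English description precedes it below -/
import Mathlib

section
/- Fix a, b > 0, ε > 0, r₂ > r₁ > 0 and c₁, c₂ > 0. There exist constants c₃ > 0 and c > 0, depending only on r₁, r₂, c₁, c₂, a, b, ε, such that for every n, every matrix A satisfying condition (A), every H satisfying conditions (H1)–(H2), and every region Ω with U_n(r₁n^ε) ⊆ Ω ⊆ U_n(r₂n^ε): (i) ⟨1⟩_Ω = (1 + δ)·⟨1⟩ with |δ| ≤ c·exp(−c₃·n^{2ε}), and (ii) |⟨1⟩_{F,Ω}| ≤ c·⟨1⟩. -/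
open MeasureTheory Matrix Finset

/-- The ℓ^p norm on `Fin n → ℝ` (with `p = ⊤` the maximum norm). -/
noncomputable def lpnorm {n : ℕ} (p : ENNReal) (x : Fin n → ℝ) : ℝ :=
  if p = ⊤ then ⨆ j, |x j| else (∑ j, |x j| ^ p.toReal) ^ (1 / p.toReal)

/-- The operator norm induced by the ℓ^p vector norm. -/
noncomputable def opNorm {n : ℕ} (p : ENNReal) (A : Matrix (Fin n) (Fin n) ℝ) : ℝ :=
  sSup {c : ℝ | ∃ x : Fin n → ℝ, x ≠ 0 ∧ c = lpnorm p (A.mulVec x) / lpnorm p x}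

/-- Condition (A): `A = I + X` is symmetric positive definite, `X` has zero diagonal,
`|X_{jk}| ≤ a/n` for all `j,k`, and `‖A⁻¹‖₂ ≤ b`. -/
def CondA {n : ℕ} (a b : ℝ) (A : Matrix (Fin n) (Fin n) ℝ) : Prop :=
  A.IsSymm ∧ A.PosDef ∧ (∀ j, A j j = 1) ∧
    (∀ j k, j ≠ k → |A j k| ≤ a / n) ∧ opNorm 2 A⁻¹ ≤ b

/-- The cube `U_n(ρ) = {θ ∈ ℝⁿ : |θ_j| ≤ ρ for all j}`. -/
def Uset (n : ℕ) (ρ : ℝ) : Set (Fin n → ℝ) := {θ | ∀ j, |θ j| ≤ ρ}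

/-- Conditions (H1)–(H2): `H` is C¹ with `H(θ) ≤ c₁ θᵀAθ/n` and
`‖∇H(θ)‖_∞ ≤ c₂ (‖θ‖_∞³ + ‖θ‖_∞)/n`.  (The norm `‖θ‖` on `Fin n → ℝ` is the sup norm.) -/
def CondH {n : ℕ} (c₁ c₂ : ℝ) (A : Matrix (Fin n) (Fin n) ℝ) (H : (Fin n → ℝ) → ℝ) : Prop :=
  ContDiff ℝ 1 H ∧
    (∀ θ, H θ ≤ c₁ * (θ ⬝ᵥ A.mulVec θ) / n) ∧
    (∀ θ (j : Fin n), |fderiv ℝ H θ (Pi.single j 1)| ≤ c₂ * (‖θ‖ ^ 3 + ‖θ‖) / n)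

/-!
Write `⟨g⟩` for the integral of `g` against `exp (-θᵀAθ)`. Completing the square gives the
exponential moments exactly, `⟨exp (μ θⱼ)⟩ = exp (μ² (A⁻¹)ⱼⱼ / 4) ⟨1⟩`, and `(A⁻¹)ⱼⱼ ≤ ‖A⁻¹‖₂ ≤ b`.
A Chernoff bound for each coordinate and a union bound over the `n` coordinates give
`⟨1⟩_{Ωᶜ} ≤ 2n exp (-(r₁ n^ε)² / b) ⟨1⟩`, and half of the Gaussian decay absorbs the factor `n`.

For the second estimate, (H1) gives `exp F ≤ exp (-(1 - c₁/n) θᵀAθ)`, which by rescaling `θ`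
integrates to `(1 - c₁/n)^(-n/2) ⟨1⟩ ≤ exp c₁ ⟨1⟩` as soon as `n ≥ 2c₁`. For the finitely many
smaller `n`, `H` is bounded on `Ω ⊆ U_n(r₂ n^ε)` by `c₁ (1 + a) r₂² (2c₁)^{2ε}`.
-/

open Real Filter Topology
open scoped MatrixOrder

lemma inv_sqrt_one_sub_pow_le_exp {y : ℝ} (hy₀ : 0 ≤ y) (hy : y ≤ 1 / 2) (n : ℕ) :
    (√(1 - y) ^ n)⁻¹ ≤ exp (n * y) := by
  have hinv : (1 - y)⁻¹ ≤ exp y ^ 2 :=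
    calc (1 - y)⁻¹ ≤ 2 * y + 1 := by
          rw [inv_le_iff_one_le_mul₀ (by linarith)]; nlinarith
      _ ≤ exp (2 * y) := add_one_le_exp _
      _ = exp y ^ 2 := by rw [← exp_nat_mul]; norm_num
  have hsqrt : (√(1 - y))⁻¹ ≤ exp y := by
    rw [← sqrt_inv, ← sqrt_sq (exp_pos y).le]
    exact sqrt_le_sqrt hinv
  rw [← inv_pow, exp_nat_mul]
  exact pow_le_pow_left₀ (by positivity) hsqrt n

lemma exists_natCast_mul_exp_neg_mul_rpow_le {c ε : ℝ} (hc : 0 < c) (hε : 0 < ε) :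
    ∃ C, ∀ k : ℕ, k * exp (-c * k ^ ε) ≤ C := by
  have hlim : Tendsto (fun k : ℕ => ((k : ℝ) ^ ε) ^ ε⁻¹ * exp (-c * (k : ℝ) ^ ε)) atTop (𝓝 0) :=
    (tendsto_rpow_mul_exp_neg_mul_atTop_nhds_zero ε⁻¹ c hc).comp
      ((tendsto_rpow_atTop hε).comp tendsto_natCast_atTop_atTop)
  obtain ⟨C, hC⟩ := hlim.bddAbove_range
  exact ⟨C, fun k => by
    simpa [rpow_rpow_inv (Nat.cast_nonneg k) hε.ne'] using hC (Set.mem_range_self k)⟩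

lemma exists_two_mul_natCast_mul_exp_neg_sq_div_le {r b ε : ℝ} (hr : 0 < r) (hb : 0 < b)
    (hε : 0 < ε) : ∃ C, ∀ n : ℕ, 2 * n * exp (-((r * (n : ℝ) ^ ε) ^ 2 / b))
      ≤ C * exp (-(r ^ 2 / (2 * b)) * (n : ℝ) ^ (2 * ε)) := by
  obtain ⟨C, hC⟩ := exists_natCast_mul_exp_neg_mul_rpow_le (c := r ^ 2 / (2 * b)) (by positivity)
    (by positivity : 0 < 2 * ε)
  refine ⟨2 * C, fun n => ?_⟩
  have hsplit : -((r * (n : ℝ) ^ ε) ^ 2 / b)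
      = -(r ^ 2 / (2 * b)) * (n : ℝ) ^ (2 * ε) + -(r ^ 2 / (2 * b)) * (n : ℝ) ^ (2 * ε) := by
    rw [mul_pow, ← rpow_mul_natCast (Nat.cast_nonneg n)]
    push_cast
    field_simp
    ring_nf
  rw [hsplit, exp_add, ← mul_assoc, mul_assoc 2]
  gcongr
  exact hC n

lemma setIntegral_le_sum_setIntegral_of_subset_iUnion {α ι : Type*} [MeasurableSpace α]
    {μ : Measure α} [Fintype ι] {f : α → ℝ} (hf : Integrable f μ) (hf₀ : 0 ≤ᵐ[μ] f)
    {s : Set α} {t : ι → Set α} (hs : MeasurableSet s) (ht : ∀ i, MeasurableSet (t i))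
    (hst : s ⊆ ⋃ i, t i) : ∫ x in s, f x ∂μ ≤ ∑ i, ∫ x in t i, f x ∂μ := by
  simp_rw [← integral_indicator hs, ← integral_indicator (ht _)]
  rw [← integral_finsetSum _ fun i _ => hf.indicator (ht i)]
  refine integral_mono_ae (hf.indicator hs)
    (integrable_finsetSum _ fun i _ => hf.indicator (ht i)) ?_
  filter_upwards [hf₀] with x hx
  have hnn : ∀ i, 0 ≤ (t i).indicator f x := fun i => Set.indicator_apply_nonneg fun _ => hx
  by_cases hxs : x ∈ s
  · obtain ⟨i, hi⟩ := Set.mem_iUnion.1 (hst hxs)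
    rw [Set.indicator_of_mem hxs, ← Set.indicator_of_mem hi f]
    exact single_le_sum (fun k _ => hnn k) (mem_univ i)
  · rw [Set.indicator_of_notMem hxs]
    exact sum_nonneg fun k _ => hnn k

lemma exists_setIntegral_eq_one_add_mul {α : Type*} [MeasurableSpace α] {μ : Measure α}
    {f : α → ℝ} (hf : Integrable f μ) {s : Set α} (hs : MeasurableSet s)
    (hpos : 0 < ∫ x, f x ∂μ) {η : ℝ} (h : |∫ x in sᶜ, f x ∂μ| ≤ η * ∫ x, f x ∂μ) :
    ∃ δ, |δ| ≤ η ∧ ∫ x in s, f x ∂μ = (1 + δ) * ∫ x, f x ∂μ := by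
  refine ⟨-(∫ x in sᶜ, f x ∂μ) / ∫ x, f x ∂μ, ?_, ?_⟩
  · rwa [abs_div, abs_neg, abs_of_pos hpos, div_le_iff₀ hpos]
  · rw [add_mul, div_mul_cancel₀ _ hpos.ne', ← integral_add_compl hs hf]
    ring

variable {n : ℕ}

section QuadraticForm

variable {A : Matrix (Fin n) (Fin n) ℝ}

lemma Matrix.PosDef.exists_pos_mul_sum_sq_le (hA : A.PosDef) :
    ∃ m > 0, ∀ θ : Fin n → ℝ, m * ∑ j, θ j ^ 2 ≤ θ ⬝ᵥ A *ᵥ θ := by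
  cases n with
  | zero => exact ⟨1, one_pos, fun θ => by simp⟩
  | succ k =>
  obtain ⟨m, hm, hle⟩ := (CFC.exists_pos_algebraMap_le_iff hA.isHermitian.isSelfAdjoint).2
    fun _ hx => hA.isStrictlyPositive.spectrum_pos hx
  refine ⟨m, hm, fun θ => ?_⟩
  have := (Matrix.le_iff.1 hle).dotProduct_mulVec_nonneg θ
  rw [star_trivial, sub_mulVec, dotProduct_sub, Algebra.algebraMap_eq_smul_one, smul_mulVec,
    one_mulVec, dotProduct_smul, smul_eq_mul, sub_nonneg] at this
  simpa only [dotProduct, sq] using this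

lemma Matrix.IsSymm.sub_dotProduct_mulVec_sub (hA : A.IsSymm) (θ v : Fin n → ℝ) :
    (θ - v) ⬝ᵥ A *ᵥ (θ - v) = θ ⬝ᵥ A *ᵥ θ - 2 * ((A *ᵥ v) ⬝ᵥ θ) + v ⬝ᵥ A *ᵥ v := by
  have hv : v ⬝ᵥ A *ᵥ θ = (A *ᵥ v) ⬝ᵥ θ := by
    rw [dotProduct_mulVec, ← mulVec_transpose, hA.eq]
  rw [mulVec_sub, dotProduct_sub, sub_dotProduct, sub_dotProduct, hv, dotProduct_comm θ (A *ᵥ v)]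
  ring

lemma dotProduct_mulVec_self_le_of_abs_le {a ρ : ℝ} (ha : 0 ≤ a) (hdiag : ∀ j, A j j = 1)
    (hoff : ∀ j k, j ≠ k → |A j k| ≤ a / n) {θ : Fin n → ℝ} (hθ : ∀ j, |θ j| ≤ ρ) :
    θ ⬝ᵥ A *ᵥ θ ≤ (1 + a) * n * ρ ^ 2 := by
  have hentry : ∀ j k, θ j * (A j k * θ k) ≤ ((if j = k then 1 else 0) + a / n) * ρ ^ 2 := by
    intro j k
    have hA : |A j k| ≤ (if j = k then 1 else 0) + a / n := by
      split_ifs with h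
      · subst h
        rw [hdiag, abs_one]
        linarith [show 0 ≤ a / n by positivity]
      · simpa using hoff j k h
    have hθθ : |θ j| * |θ k| ≤ ρ ^ 2 := by
      rw [sq]; exact mul_le_mul (hθ j) (hθ k) (abs_nonneg _) ((abs_nonneg _).trans (hθ j))
    calc θ j * (A j k * θ k) ≤ |θ j * (A j k * θ k)| := le_abs_self _
      _ = |A j k| * (|θ j| * |θ k|) := by rw [abs_mul, abs_mul]; ring
      _ ≤ _ := mul_le_mul hA hθθ (by positivity) ((abs_nonneg _).trans hA)
  calc θ ⬝ᵥ A *ᵥ θ = ∑ j, ∑ k, θ j * (A j k * θ k) := by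
        simp only [dotProduct, mulVec, mul_sum]
    _ ≤ ∑ j : Fin n, ∑ k : Fin n, ((if j = k then 1 else 0) + a / n) * ρ ^ 2 :=
        sum_le_sum fun j _ => sum_le_sum fun k _ => hentry j k
    _ = (1 + a) * n * ρ ^ 2 := by
        rcases eq_or_ne n 0 with rfl | hn
        · simp
        simp only [← sum_mul, sum_add_distrib, sum_ite_eq, mem_univ, if_true, sum_const,
          card_univ, Fintype.card_fin, nsmul_eq_mul]
        field_simp

lemma Matrix.PosDef.inv_diag_pos (hA : A.PosDef) (j : Fin n) : 0 < A⁻¹ j j := by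
  simpa [single_dotProduct, mulVec_single] using
    hA.inv.re_dotProduct_pos (Pi.single_ne_zero_iff.2 one_ne_zero : (Pi.single j 1 : Fin n → ℝ) ≠ 0)

lemma Matrix.PosDef.integrable_exp_dotProduct_sub_mul (hA : A.PosDef) (w : Fin n → ℝ) {s : ℝ}
    (hs : 0 < s) : Integrable fun θ : Fin n → ℝ => exp (w ⬝ᵥ θ - s * (θ ⬝ᵥ A *ᵥ θ)) := by
  obtain ⟨m, hm, hmQ⟩ := hA.exists_pos_mul_sum_sq_le
  have hgauss := (GaussianFourier.integrable_cexp_neg_mul_sum_add (b := ((s * m : ℝ) : ℂ))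
    (by simpa using mul_pos hs hm) fun j => (w j : ℂ)).norm
  refine hgauss.mono' (by fun_prop) (.of_forall fun θ => ?_)
  rw [norm_of_nonneg (exp_pos _).le, Complex.norm_exp]
  have hre : -((s * m : ℝ) : ℂ) * ∑ j, (θ j : ℂ) ^ 2 + ∑ j, (w j : ℂ) * θ j
      = ((w ⬝ᵥ θ - s * m * ∑ j, θ j ^ 2 : ℝ) : ℂ) := by
    simp only [dotProduct]
    push_cast
    ring
  rw [hre, Complex.ofReal_re, mul_assoc]
  gcongr
  exact hmQ θ

lemma Matrix.PosDef.integrable_exp_neg (hA : A.PosDef) :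
    Integrable fun θ : Fin n → ℝ => exp (-(θ ⬝ᵥ A *ᵥ θ)) := by
  simpa using hA.integrable_exp_dotProduct_sub_mul 0 one_pos

lemma Matrix.PosDef.integrable_exp_mul_apply_sub (hA : A.PosDef) (j : Fin n) (μ : ℝ) :
    Integrable fun θ : Fin n → ℝ => exp (μ * θ j - θ ⬝ᵥ A *ᵥ θ) := by
  simpa [single_dotProduct] using hA.integrable_exp_dotProduct_sub_mul (Pi.single j μ) one_pos

lemma Matrix.PosDef.integral_exp_neg_pos (hA : A.PosDef) :
    0 < ∫ θ : Fin n → ℝ, exp (-(θ ⬝ᵥ A *ᵥ θ)) :=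
  integral_exp_pos hA.integrable_exp_neg

lemma Matrix.PosDef.integral_exp_dotProduct_sub (hA : A.PosDef) (w : Fin n → ℝ) :
    ∫ θ, exp (w ⬝ᵥ θ - θ ⬝ᵥ A *ᵥ θ)
      = exp (w ⬝ᵥ A⁻¹ *ᵥ w / 4) * ∫ θ, exp (-(θ ⬝ᵥ A *ᵥ θ)) := by
  set v : Fin n → ℝ := (2⁻¹ : ℝ) • A⁻¹ *ᵥ w
  have hAv : A *ᵥ v = (2⁻¹ : ℝ) • w := by
    rw [mulVec_smul, mulVec_mulVec, mul_nonsing_inv _ (A.isUnit_iff_isUnit_det.1 hA.isUnit),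
      one_mulVec]
  have hsquare : ∀ θ, w ⬝ᵥ θ - θ ⬝ᵥ A *ᵥ θ
      = w ⬝ᵥ A⁻¹ *ᵥ w / 4 + -((θ - v) ⬝ᵥ A *ᵥ (θ - v)) := by
    intro θ
    rw [(isHermitian_iff_isSymm.1 hA.isHermitian).sub_dotProduct_mulVec_sub, hAv]
    simp only [v, smul_dotProduct, dotProduct_smul, smul_eq_mul, dotProduct_comm (A⁻¹ *ᵥ w) w]
    ring
  simp_rw [hsquare, exp_add, integral_const_mul,
    integral_sub_right_eq_self (fun θ => exp (-(θ ⬝ᵥ A *ᵥ θ))) v]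

lemma Matrix.PosDef.integral_exp_mul_apply_sub (hA : A.PosDef) (j : Fin n) (μ : ℝ) :
    ∫ θ, exp (μ * θ j - θ ⬝ᵥ A *ᵥ θ)
      = exp (μ ^ 2 * A⁻¹ j j / 4) * ∫ θ, exp (-(θ ⬝ᵥ A *ᵥ θ)) := by
  simpa [single_dotProduct, mulVec_single, dotProduct_single, sq, mul_comm μ, mul_assoc]
    using hA.integral_exp_dotProduct_sub (Pi.single j μ)

lemma integral_exp_neg_smul_quadratic {s : ℝ} (hs : 0 < s) :
    ∫ θ : Fin n → ℝ, exp (-(s * (θ ⬝ᵥ A *ᵥ θ)))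
      = (√s ^ n)⁻¹ * ∫ θ : Fin n → ℝ, exp (-(θ ⬝ᵥ A *ᵥ θ)) := by
  simpa only [mulVec_smul, dotProduct_smul, smul_dotProduct, smul_eq_mul, Module.finrank_fin_fun,
    ← mul_assoc, mul_self_sqrt hs.le] using Measure.integral_comp_smul_of_nonneg
      (volume : Measure (Fin n → ℝ)) (fun θ => exp (-(θ ⬝ᵥ A *ᵥ θ))) √s (hR := sqrt_nonneg s)

lemma Matrix.PosDef.setIntegral_exp_neg_le_of_le_abs (hA : A.PosDef) (j : Fin n) {t : ℝ}
    (ht : 0 ≤ t) :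
    ∫ θ in {θ | t ≤ |θ j|}, exp (-(θ ⬝ᵥ A *ᵥ θ))
      ≤ 2 * exp (-(t ^ 2 / A⁻¹ j j)) * ∫ θ, exp (-(θ ⬝ᵥ A *ᵥ θ)) := by
  set d := A⁻¹ j j
  have hd : 0 < d := hA.inv_diag_pos j
  -- the tilt `μ = 2t/d` minimizes the Chernoff exponent `-μt + μ²d/4`
  set μ := 2 * t / d
  have hμ : 0 ≤ μ := by positivity
  set g := fun θ : Fin n → ℝ =>
    exp (-(μ * t)) * (exp (μ * θ j - θ ⬝ᵥ A *ᵥ θ) + exp (-μ * θ j - θ ⬝ᵥ A *ᵥ θ))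
  have hg : Integrable g :=
    ((hA.integrable_exp_mul_apply_sub j μ).add (hA.integrable_exp_mul_apply_sub j (-μ))).const_mul _
  have hle : ∀ θ ∈ {θ : Fin n → ℝ | t ≤ |θ j|}, exp (-(θ ⬝ᵥ A *ᵥ θ)) ≤ g θ := by
    intro θ (hθ : t ≤ |θ j|)
    have hμθ : μ * t ≤ μ * |θ j| := mul_le_mul_of_nonneg_left hθ hμ
    calc exp (-(θ ⬝ᵥ A *ᵥ θ)) ≤ exp (-(μ * t)) * exp (μ * |θ j| - θ ⬝ᵥ A *ᵥ θ) := by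
          rw [← exp_add]; gcongr; linarith
      _ ≤ g θ := by
          simp only [g]
          gcongr
          rcases abs_cases (θ j) with ⟨h, -⟩ | ⟨h, -⟩ <;> rw [h]
          · linarith [exp_pos (-μ * θ j - θ ⬝ᵥ A *ᵥ θ)]
          · rw [mul_neg, ← neg_mul]; linarith [exp_pos (μ * θ j - θ ⬝ᵥ A *ᵥ θ)]
  have hexponent : -(μ * t) + μ ^ 2 * d / 4 = -(t ^ 2 / d) := by
    simp only [μ]; field_simp; ring
  calc ∫ θ in {θ | t ≤ |θ j|}, exp (-(θ ⬝ᵥ A *ᵥ θ))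
      ≤ ∫ θ in {θ | t ≤ |θ j|}, g θ :=
        setIntegral_mono_on hA.integrable_exp_neg.integrableOn hg.integrableOn
          (measurableSet_le measurable_const (by fun_prop)) hle
    _ ≤ ∫ θ, g θ := setIntegral_le_integral hg (.of_forall fun θ => by positivity)
    _ = 2 * exp (-(t ^ 2 / d)) * ∫ θ, exp (-(θ ⬝ᵥ A *ᵥ θ)) := by
        rw [integral_const_mul, integral_add (hA.integrable_exp_mul_apply_sub j μ)
          (hA.integrable_exp_mul_apply_sub j (-μ)), hA.integral_exp_mul_apply_sub,
          hA.integral_exp_mul_apply_sub, neg_sq, ← hexponent, exp_add]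
        ring

lemma Matrix.PosDef.setIntegral_compl_exp_neg_le (hA : A.PosDef) {b : ℝ}
    (hb : ∀ j, A⁻¹ j j ≤ b) {Ω : Set (Fin n → ℝ)} (hΩ : MeasurableSet Ω) {t : ℝ} (ht : 0 ≤ t)
    (hU : Uset n t ⊆ Ω) :
    ∫ θ in Ωᶜ, exp (-(θ ⬝ᵥ A *ᵥ θ))
      ≤ 2 * n * exp (-(t ^ 2 / b)) * ∫ θ, exp (-(θ ⬝ᵥ A *ᵥ θ)) := by
  have hcover : Ωᶜ ⊆ ⋃ j, {θ : Fin n → ℝ | t ≤ |θ j|} := by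
    intro θ hθ
    obtain ⟨j, hj⟩ : ∃ j, t < |θ j| := by
      simpa [Uset] using fun h => hθ (hU h)
    exact Set.mem_iUnion.2 ⟨j, hj.le⟩
  calc ∫ θ in Ωᶜ, exp (-(θ ⬝ᵥ A *ᵥ θ))
      ≤ ∑ j, ∫ θ in {θ | t ≤ |θ j|}, exp (-(θ ⬝ᵥ A *ᵥ θ)) :=
        setIntegral_le_sum_setIntegral_of_subset_iUnion hA.integrable_exp_neg
          (.of_forall fun _ => (exp_pos _).le) hΩ.compl
          (fun j => measurableSet_le measurable_const (by fun_prop)) hcover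
    _ ≤ ∑ _j : Fin n, 2 * exp (-(t ^ 2 / b)) * ∫ θ, exp (-(θ ⬝ᵥ A *ᵥ θ)) := by
        refine sum_le_sum fun j _ => (hA.setIntegral_exp_neg_le_of_le_abs j ht).trans ?_
        have := hA.inv_diag_pos j
        gcongr
        exact hb j
    _ = 2 * n * exp (-(t ^ 2 / b)) * ∫ θ, exp (-(θ ⬝ᵥ A *ᵥ θ)) := by
        simp only [sum_const, card_univ, Fintype.card_fin, nsmul_eq_mul]
        ring

lemma Matrix.PosDef.setIntegral_exp_neg_add_le_of_le (hA : A.PosDef) {Ω : Set (Fin n → ℝ)}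
    (hΩ : MeasurableSet Ω) {H : (Fin n → ℝ) → ℝ} {L : ℝ} (hH : ∀ θ ∈ Ω, H θ ≤ L) :
    ∫ θ in Ω, exp (-(θ ⬝ᵥ A *ᵥ θ) + H θ) ≤ exp L * ∫ θ, exp (-(θ ⬝ᵥ A *ᵥ θ)) := by
  calc ∫ θ in Ω, exp (-(θ ⬝ᵥ A *ᵥ θ) + H θ)
      ≤ ∫ θ in Ω, exp L * exp (-(θ ⬝ᵥ A *ᵥ θ)) := by
        refine integral_mono_of_nonneg (.of_forall fun _ => (exp_pos _).le)
          (hA.integrable_exp_neg.const_mul _).integrableOn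
          ((ae_restrict_iff' hΩ).2 (.of_forall fun θ hθ => ?_))
        dsimp only
        rw [← exp_add]
        exact exp_le_exp.2 (by linarith [hH θ hθ])
    _ = exp L * ∫ θ in Ω, exp (-(θ ⬝ᵥ A *ᵥ θ)) := integral_const_mul _ _
    _ ≤ exp L * ∫ θ, exp (-(θ ⬝ᵥ A *ᵥ θ)) := mul_le_mul_of_nonneg_left
        (setIntegral_le_integral hA.integrable_exp_neg (.of_forall fun _ => (exp_pos _).le))
        (exp_pos L).le

lemma Matrix.PosDef.setIntegral_exp_neg_add_le_exp (hA : A.PosDef) {c : ℝ} (hc : 0 ≤ c)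
    (hn : 2 * c ≤ n) {H : (Fin n → ℝ) → ℝ} (hH : ∀ θ, H θ ≤ c * (θ ⬝ᵥ A *ᵥ θ) / n)
    (Ω : Set (Fin n → ℝ)) :
    ∫ θ in Ω, exp (-(θ ⬝ᵥ A *ᵥ θ) + H θ) ≤ exp c * ∫ θ, exp (-(θ ⬝ᵥ A *ᵥ θ)) := by
  have hy : c / n ≤ 1 / 2 := div_le_of_le_mul₀ (Nat.cast_nonneg n) (by norm_num) (by linarith)
  have hs : 0 < 1 - c / n := by linarith
  have hint : Integrable fun θ : Fin n → ℝ => exp (-((1 - c / n) * (θ ⬝ᵥ A *ᵥ θ))) := by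
    simpa using hA.integrable_exp_dotProduct_sub_mul 0 hs
  calc ∫ θ in Ω, exp (-(θ ⬝ᵥ A *ᵥ θ) + H θ)
      ≤ ∫ θ in Ω, exp (-((1 - c / n) * (θ ⬝ᵥ A *ᵥ θ))) := by
        refine integral_mono_of_nonneg (.of_forall fun _ => (exp_pos _).le) hint.integrableOn
          (.of_forall fun θ => exp_le_exp.2 ?_)
        have := hH θ
        rw [mul_div_right_comm] at this
        linarith
    _ ≤ ∫ θ, exp (-((1 - c / n) * (θ ⬝ᵥ A *ᵥ θ))) :=
        setIntegral_le_integral hint (.of_forall fun _ => (exp_pos _).le)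
    _ = (√(1 - c / n) ^ n)⁻¹ * ∫ θ, exp (-(θ ⬝ᵥ A *ᵥ θ)) := integral_exp_neg_smul_quadratic hs
    _ ≤ exp c * ∫ θ, exp (-(θ ⬝ᵥ A *ᵥ θ)) := by
        gcongr
        refine (inv_sqrt_one_sub_pow_le_exp (by positivity) hy n).trans (exp_le_exp.2 ?_)
        rw [mul_div_assoc', mul_comm]
        exact div_le_of_le_mul₀ (Nat.cast_nonneg n) hc le_rfl

end QuadraticForm

section ConditionA

lemma lpnorm_two_eq (x : Fin n → ℝ) : lpnorm 2 x = √(∑ j, x j ^ 2) := by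
  simp only [lpnorm, ENNReal.ofNat_ne_top, if_false, ENNReal.toReal_ofNat, rpow_two, sq_abs,
    sqrt_eq_rpow, one_div]

lemma bddAbove_lpnorm_two_mulVec_div (M : Matrix (Fin n) (Fin n) ℝ) :
    BddAbove {c : ℝ | ∃ x : Fin n → ℝ, x ≠ 0 ∧ c = lpnorm 2 (M *ᵥ x) / lpnorm 2 x} := by
  refine ⟨√(∑ j, ∑ k, M j k ^ 2), ?_⟩
  rintro _ ⟨x, hx, rfl⟩
  have hpos : 0 < lpnorm 2 x := by
    rw [lpnorm_two_eq, sqrt_pos]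
    obtain ⟨j, hj⟩ := Function.ne_iff.1 hx
    exact (sq_pos_of_ne_zero hj).trans_le
      (single_le_sum (fun k _ => sq_nonneg (x k)) (mem_univ j))
  rw [div_le_iff₀ hpos, lpnorm_two_eq, lpnorm_two_eq, ← sqrt_mul (by positivity), sum_mul]
  exact sqrt_le_sqrt (sum_le_sum fun j _ => sum_mul_sq_le_sq_mul_sq univ (M j) x)

lemma le_opNorm_two (M : Matrix (Fin n) (Fin n) ℝ) (j : Fin n) : M j j ≤ opNorm 2 M := by
  have hcol : lpnorm 2 (M *ᵥ Pi.single j 1) / lpnorm 2 (Pi.single j 1 : Fin n → ℝ)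
      = √(∑ i, M i j ^ 2) := by
    simp [lpnorm_two_eq, mulVec_single, Pi.single_apply]
  calc M j j ≤ √(∑ i, M i j ^ 2) :=
        (le_abs_self _).trans ((sqrt_sq_eq_abs _).symm.trans_le
          (sqrt_le_sqrt (single_le_sum (fun i _ => sq_nonneg (M i j)) (mem_univ j))))
    _ ≤ opNorm 2 M := le_csSup (bddAbove_lpnorm_two_mulVec_div M)
        ⟨Pi.single j 1, Pi.single_ne_zero_iff.2 one_ne_zero, hcol.symm⟩

variable {a b : ℝ} {A : Matrix (Fin n) (Fin n) ℝ}

lemma CondA.inv_diag_le (hA : CondA a b A) (j : Fin n) : A⁻¹ j j ≤ b :=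
  (le_opNorm_two A⁻¹ j).trans hA.2.2.2.2

lemma CondA.le_of_mem_Uset (hA : CondA a b A) (ha : 0 ≤ a) {c₁ : ℝ} (hc₁ : 0 ≤ c₁)
    {H : (Fin n → ℝ) → ℝ} (hH : ∀ θ, H θ ≤ c₁ * (θ ⬝ᵥ A *ᵥ θ) / n) {ρ : ℝ} {θ : Fin n → ℝ}
    (hθ : θ ∈ Uset n ρ) : H θ ≤ c₁ * (1 + a) * ρ ^ 2 :=
  calc H θ ≤ c₁ * ((1 + a) * n * ρ ^ 2) / n := by
        refine (hH θ).trans (div_le_div_of_nonneg_right ?_ (Nat.cast_nonneg n))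
        exact mul_le_mul_of_nonneg_left
          (dotProduct_mulVec_self_le_of_abs_le ha hA.2.2.1 hA.2.2.2.1 hθ) hc₁
    _ = c₁ * (1 + a) * ρ ^ 2 * (n / n) := by ring
    _ ≤ c₁ * (1 + a) * ρ ^ 2 := mul_le_of_le_one_right (by positivity) (div_self_le_one _)

end ConditionA

theorem integral_region_estimates_general (a b ε r₁ r₂ c₁ c₂ : ℝ) (ha : 0 < a) (hb : 0 < b)
    (hε : 0 < ε) (hr₁ : 0 < r₁) (hc₁ : 0 < c₁) :
    ∃ c₃ c : ℝ, 0 < c₃ ∧ 0 < c ∧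
      ∀ (n : ℕ) (A : Matrix (Fin n) (Fin n) ℝ), CondA a b A →
      ∀ H : (Fin n → ℝ) → ℝ, CondH c₁ c₂ A H →
      ∀ Ω : Set (Fin n → ℝ), MeasurableSet Ω →
        Uset n (r₁ * (n : ℝ) ^ (ε : ℝ)) ⊆ Ω → Ω ⊆ Uset n (r₂ * (n : ℝ) ^ (ε : ℝ)) →
        ((∃ δ : ℝ, |δ| ≤ c * Real.exp (-c₃ * (n : ℝ) ^ (2 * ε)) ∧
            (∫ θ in Ω, Real.exp (-(θ ⬝ᵥ A.mulVec θ))) =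
              (1 + δ) * ∫ θ : Fin n → ℝ, Real.exp (-(θ ⬝ᵥ A.mulVec θ))) ∧
          |∫ θ in Ω, Real.exp (-(θ ⬝ᵥ A.mulVec θ) + H θ)| ≤
            c * ∫ θ : Fin n → ℝ, Real.exp (-(θ ⬝ᵥ A.mulVec θ))) := by
  obtain ⟨C, hC⟩ := exists_two_mul_natCast_mul_exp_neg_sq_div_le hr₁ hb hε
  set K := c₁ * (1 + a) * (r₂ * (2 * c₁) ^ ε) ^ 2
  refine ⟨r₁ ^ 2 / (2 * b), |C| + exp c₁ + exp K, by positivity, by positivity, ?_⟩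
  rintro n A hA H ⟨-, hH, -⟩ Ω hΩ hUΩ hΩU
  have hpd : A.PosDef := hA.2.1
  have habs : ∀ s : Set (Fin n → ℝ), ∀ F : (Fin n → ℝ) → ℝ,
      |∫ θ in s, exp (F θ)| = ∫ θ in s, exp (F θ) :=
    fun s F => abs_of_nonneg (integral_nonneg fun _ => (exp_pos _).le)
  refine ⟨exists_setIntegral_eq_one_add_mul hpd.integrable_exp_neg hΩ hpd.integral_exp_neg_pos ?_,
    ?_⟩
  · rw [habs]
    refine (hpd.setIntegral_compl_exp_neg_le hA.inv_diag_le hΩ (by positivity) hUΩ).trans ?_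
    gcongr ?_ * _
    refine (hC n).trans ?_
    gcongr
    linarith [le_abs_self C, exp_pos c₁, exp_pos K]
  · rw [habs]
    rcases le_or_gt (2 * c₁) n with hn | hn
    · refine (hpd.setIntegral_exp_neg_add_le_exp hc₁.le hn hH Ω).trans ?_
      gcongr
      linarith [abs_nonneg C, exp_pos K]
    · have hHK : ∀ θ ∈ Ω, H θ ≤ K := fun θ hθ =>
        (hA.le_of_mem_Uset ha.le hc₁.le hH (hΩU hθ)).trans (by simp only [K, mul_pow]; gcongr)
      refine (hpd.setIntegral_exp_neg_add_le_of_le hΩ hHK).trans ?_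
      gcongr
      linarith [abs_nonneg C, exp_pos c₁]

/-- Lemma 4.2 (4.19)–(4.20) of the paper: concentration of the Gaussian-type
integral on `Ω`, and boundedness of `⟨1⟩_{F,Ω}` by `⟨1⟩`. -/
theorem integral_region_estimates (a b ε r₁ r₂ c₁ c₂ : ℝ) (ha : 0 < a) (hb : 0 < b)
    (hε : 0 < ε) (hr₁ : 0 < r₁) (hr₁₂ : r₁ < r₂) (hc₁ : 0 < c₁) (hc₂ : 0 < c₂) :
    ∃ c₃ c : ℝ, 0 < c₃ ∧ 0 < c ∧
      ∀ (n : ℕ) (A : Matrix (Fin n) (Fin n) ℝ), CondA a b A →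
      ∀ H : (Fin n → ℝ) → ℝ, CondH c₁ c₂ A H →
      ∀ Ω : Set (Fin n → ℝ), MeasurableSet Ω →
        Uset n (r₁ * (n : ℝ) ^ (ε : ℝ)) ⊆ Ω → Ω ⊆ Uset n (r₂ * (n : ℝ) ^ (ε : ℝ)) →
        ((∃ δ : ℝ, |δ| ≤ c * Real.exp (-c₃ * (n : ℝ) ^ (2 * ε)) ∧
            (∫ θ in Ω, Real.exp (-(θ ⬝ᵥ A.mulVec θ))) =
              (1 + δ) * ∫ θ : Fin n → ℝ, Real.exp (-(θ ⬝ᵥ A.mulVec θ))) ∧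
          |∫ θ in Ω, Real.exp (-(θ ⬝ᵥ A.mulVec θ) + H θ)| ≤
            c * ∫ θ : Fin n → ℝ, Real.exp (-(θ ⬝ᵥ A.mulVec θ))) :=
  integral_region_estimates_general a b ε r₁ r₂ c₁ c₂ ha hb hε hr₁ hc₁
end

section
/- For all a, b > 0 there exists c > 0 depending only on a and b such that for every n and every n×n real matrix A = I + X which is symmetric positive definite with X_{jj} = 0 for all j, |X_{jk}| ≤ a/n for all j,k, and ‖A^{−1}‖₂ ≤ b, the condition numbers satisfy μ_∞(A) = μ₁(A) ≤ c·μ₂(A), where μ_p(A) = ‖A‖_p·‖A^{−1}‖_p. -/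
open MeasureTheory Matrix Finset

/-! Write `A = 1 + X`. The row sums of `A` are at most `1 + a`. Since `A⁻¹ = 1 - X + X A⁻¹ X`,
and Cauchy–Schwarz with `‖A⁻¹‖₂ ≤ b` bounds every entry of `X A⁻¹ X` by `a²b/n`, the row sums
of `A⁻¹` are at most `1 + a + a²b`. This bounds `μ_∞(A)` by a constant, while
`μ₂(A) ≥ ‖A A⁻¹‖₂ = 1`. Finally `‖B‖₁ = ‖Bᵀ‖_∞`, and `A`, `A⁻¹` are symmetric. -/

open WithLp (toLp ofLp)

theorem ContinuousLinearMap.sSup_norm_apply_div_norm {𝕜 E F : Type*} [NontriviallyNormedField 𝕜]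
    [NormedAddCommGroup E] [NormedSpace 𝕜 E] [NormedAddCommGroup F] [NormedSpace 𝕜 F]
    (f : E →L[𝕜] F) : sSup {c : ℝ | ∃ x, x ≠ 0 ∧ c = ‖f x‖ / ‖x‖} = ‖f‖ := by
  have hle : ∀ c ∈ {c : ℝ | ∃ x, x ≠ 0 ∧ c = ‖f x‖ / ‖x‖}, c ≤ ‖f‖ := by
    rintro _ ⟨x, -, rfl⟩
    exact div_le_of_le_mul₀ (norm_nonneg _) (norm_nonneg _) (f.le_opNorm x)
  refine le_antisymm (Real.sSup_le hle (norm_nonneg f)) (f.opNorm_le_bound ?_ fun x => ?_)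
  · exact Real.sSup_nonneg (by rintro _ ⟨x, -, rfl⟩; positivity)
  rcases eq_or_ne x 0 with rfl | hx
  · simp
  rw [← div_le_iff₀ (norm_pos_iff.2 hx)]
  exact le_csSup ⟨‖f‖, hle⟩ ⟨x, hx, rfl⟩

theorem Matrix.inv_eq_one_add_sub_one_mul_inv_mul_sub_one {ι R : Type*} [Fintype ι]
    [DecidableEq ι] [CommRing R] {A : Matrix ι ι R} (hA : IsUnit A) :
    A⁻¹ = 1 + ((A - 1) * A⁻¹ * (A - 1) - (A - 1)) := by
  have hdet := (isUnit_iff_isUnit_det A).mp hA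
  simp only [sub_mul, mul_sub, one_mul, mul_one, mul_nonsing_inv _ hdet,
    nonsing_inv_mul _ hdet]
  abel

theorem abs_mulVec_apply_le {ι : Type*} [Fintype ι] (A : Matrix ι ι ℝ) (x : ι → ℝ) (j : ι) :
    |(A *ᵥ x) j| ≤ ∑ k, |A j k| * |x k| := by
  simpa only [mulVec, dotProduct, abs_mul] using abs_sum_le_sum_abs (fun k => A j k * x k) univ

section OperatorNorm

variable {n : ℕ} {p : ENNReal}

theorem lpnorm_eq_norm_toLp [Fact (1 ≤ p)] (x : Fin n → ℝ) : lpnorm p x = ‖toLp p x‖ := by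
  rcases eq_or_ne p ⊤ with rfl | hp
  · simp [lpnorm, PiLp.norm_eq_ciSup]
  · simp [lpnorm, hp, PiLp.norm_eq_sum (ENNReal.toReal_pos (one_pos.trans_le Fact.out).ne' hp)]

theorem lpnorm_nonneg [Fact (1 ≤ p)] (x : Fin n → ℝ) : 0 ≤ lpnorm p x := by
  rw [lpnorm_eq_norm_toLp]
  exact norm_nonneg _

theorem abs_apply_le_lpnorm [Fact (1 ≤ p)] (x : Fin n → ℝ) (j : Fin n) : |x j| ≤ lpnorm p x := by
  simpa [lpnorm_eq_norm_toLp] using PiLp.norm_apply_le (toLp p x) j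

noncomputable def Matrix.toLpCLM (p : ENNReal) [Fact (1 ≤ p)] (A : Matrix (Fin n) (Fin n) ℝ) :
    WithLp p (Fin n → ℝ) →L[ℝ] WithLp p (Fin n → ℝ) :=
  LinearMap.toContinuousLinearMap (Matrix.toLpLin p p A)

theorem opNorm_eq_norm_toLpCLM [Fact (1 ≤ p)] (A : Matrix (Fin n) (Fin n) ℝ) :
    opNorm p A = ‖A.toLpCLM p‖ := by
  rw [← ContinuousLinearMap.sSup_norm_apply_div_norm, opNorm]
  congr 1
  ext c
  constructor
  · rintro ⟨x, hx, rfl⟩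
    exact ⟨toLp p x, by simpa using hx, by simp [lpnorm_eq_norm_toLp, Matrix.toLpCLM]⟩
  · rintro ⟨x, hx, rfl⟩
    exact ⟨ofLp x, by simpa using hx,
      by simp [lpnorm_eq_norm_toLp, Matrix.toLpCLM, Matrix.toLpLin_apply]⟩

theorem opNorm_nonneg [Fact (1 ≤ p)] (A : Matrix (Fin n) (Fin n) ℝ) : 0 ≤ opNorm p A := by
  rw [opNorm_eq_norm_toLpCLM]
  exact norm_nonneg _

theorem lpnorm_mulVec_le [Fact (1 ≤ p)] (A : Matrix (Fin n) (Fin n) ℝ) (x : Fin n → ℝ) :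
    lpnorm p (A *ᵥ x) ≤ opNorm p A * lpnorm p x := by
  simpa [lpnorm_eq_norm_toLp, opNorm_eq_norm_toLpCLM, Matrix.toLpCLM] using
    (A.toLpCLM p).le_opNorm (toLp p x)

theorem opNorm_le_of_lpnorm_mulVec_le [Fact (1 ≤ p)] {A : Matrix (Fin n) (Fin n) ℝ} {C : ℝ}
    (hC : 0 ≤ C) (h : ∀ x, lpnorm p (A *ᵥ x) ≤ C * lpnorm p x) : opNorm p A ≤ C := by
  rw [opNorm_eq_norm_toLpCLM]
  refine (A.toLpCLM p).opNorm_le_bound hC fun x => ?_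
  simpa [lpnorm_eq_norm_toLp, Matrix.toLpCLM, Matrix.toLpLin_apply] using h (ofLp x)

theorem opNorm_of_isEmpty [IsEmpty (Fin n)] (A : Matrix (Fin n) (Fin n) ℝ) : opNorm p A = 0 := by
  simp [opNorm, Subsingleton.elim _ (0 : Fin n → ℝ)]

theorem one_le_opNorm_mul_opNorm_inv [Fact (1 ≤ p)] [Nonempty (Fin n)]
    {A : Matrix (Fin n) (Fin n) ℝ} (hA : IsUnit A) : 1 ≤ opNorm p A * opNorm p A⁻¹ := by
  obtain ⟨x, hx⟩ := exists_ne (0 : Fin n → ℝ)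
  have hpos : 0 < lpnorm p x := by
    rw [lpnorm_eq_norm_toLp]
    simpa using hx
  refine le_of_mul_le_mul_right ?_ hpos
  calc 1 * lpnorm p x = lpnorm p (A *ᵥ (A⁻¹ *ᵥ x)) := by
        rw [mulVec_mulVec, mul_nonsing_inv _ ((isUnit_iff_isUnit_det A).mp hA), one_mulVec,
          one_mul]
    _ ≤ opNorm p A * lpnorm p (A⁻¹ *ᵥ x) := lpnorm_mulVec_le A _
    _ ≤ opNorm p A * (opNorm p A⁻¹ * lpnorm p x) :=
        mul_le_mul_of_nonneg_left (lpnorm_mulVec_le A⁻¹ x) (opNorm_nonneg A)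
    _ = opNorm p A * opNorm p A⁻¹ * lpnorm p x := by ring

theorem opNorm_top_le_of_sum_abs_row_le {A : Matrix (Fin n) (Fin n) ℝ} {C : ℝ} (hC : 0 ≤ C)
    (h : ∀ j, ∑ k, |A j k| ≤ C) : opNorm ⊤ A ≤ C := by
  refine opNorm_le_of_lpnorm_mulVec_le hC fun x => Real.iSup_le (fun j => ?_) ?_
  · calc |(A *ᵥ x) j| ≤ ∑ k, |A j k| * |x k| := abs_mulVec_apply_le A x j
      _ ≤ ∑ k, |A j k| * lpnorm ⊤ x := by gcongr with k; exact abs_apply_le_lpnorm x k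
      _ = (∑ k, |A j k|) * lpnorm ⊤ x := by rw [sum_mul]
      _ ≤ C * lpnorm ⊤ x := by gcongr; exacts [lpnorm_nonneg x, h j]
  · exact mul_nonneg hC (lpnorm_nonneg x)

theorem sum_abs_row_le_opNorm_top (A : Matrix (Fin n) (Fin n) ℝ) (j : Fin n) :
    ∑ k, |A j k| ≤ opNorm ⊤ A := by
  set x : Fin n → ℝ := fun k => SignType.sign (A j k)
  have hx : lpnorm ⊤ x ≤ 1 := Real.iSup_le (fun k => by
    rcases lt_trichotomy (A j k) 0 with h | h | h <;> simp [x, h]) zero_le_one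
  calc ∑ k, |A j k| = (A *ᵥ x) j := by simp [x, mulVec, dotProduct, self_mul_sign]
    _ ≤ lpnorm ⊤ (A *ᵥ x) := (le_abs_self _).trans (abs_apply_le_lpnorm _ j)
    _ ≤ opNorm ⊤ A * lpnorm ⊤ x := lpnorm_mulVec_le A x
    _ ≤ opNorm ⊤ A := mul_le_of_le_one_right (opNorm_nonneg A) hx

theorem opNorm_one_le_of_sum_abs_col_le {A : Matrix (Fin n) (Fin n) ℝ} {C : ℝ} (hC : 0 ≤ C)
    (h : ∀ k, ∑ j, |A j k| ≤ C) : opNorm 1 A ≤ C := by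
  refine opNorm_le_of_lpnorm_mulVec_le hC fun x => ?_
  simp only [lpnorm, ENNReal.one_ne_top, if_false, ENNReal.toReal_one, Real.rpow_one, div_one]
  calc ∑ j, |(A *ᵥ x) j| ≤ ∑ j, ∑ k, |A j k| * |x k| :=
        sum_le_sum fun j _ => abs_mulVec_apply_le A x j
    _ = ∑ k, (∑ j, |A j k|) * |x k| := by rw [sum_comm]; simp only [sum_mul]
    _ ≤ ∑ k, C * |x k| := by gcongr with k; exact h k
    _ = C * ∑ k, |x k| := by rw [mul_sum]

theorem sum_abs_col_le_opNorm_one (A : Matrix (Fin n) (Fin n) ℝ) (k : Fin n) :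
    ∑ j, |A j k| ≤ opNorm 1 A := by
  simpa [lpnorm, mulVec_single, Pi.single_apply, apply_ite] using
    lpnorm_mulVec_le (p := 1) A (Pi.single k 1)

theorem opNorm_one_eq_opNorm_top_transpose (A : Matrix (Fin n) (Fin n) ℝ) :
    opNorm 1 A = opNorm ⊤ Aᵀ :=
  le_antisymm (opNorm_one_le_of_sum_abs_col_le (opNorm_nonneg _) (sum_abs_row_le_opNorm_top Aᵀ))
    (opNorm_top_le_of_sum_abs_row_le (opNorm_nonneg _) (sum_abs_col_le_opNorm_one A))

theorem abs_dotProduct_le_lpnorm_two_mul (u v : Fin n → ℝ) :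
    |u ⬝ᵥ v| ≤ lpnorm 2 u * lpnorm 2 v := by
  simpa [lpnorm_eq_norm_toLp, EuclideanSpace.inner_toLp_toLp, dotProduct_comm] using
    abs_real_inner_le_norm (toLp 2 u) (toLp 2 v)

theorem lpnorm_two_le_sqrt_mul {u : Fin n → ℝ} {ε : ℝ} (hε : 0 ≤ ε) (hu : ∀ l, |u l| ≤ ε) :
    lpnorm 2 u ≤ √n * ε := by
  rw [lpnorm_eq_norm_toLp, EuclideanSpace.norm_eq, ← Real.sqrt_sq hε,
    ← Real.sqrt_mul n.cast_nonneg]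
  refine Real.sqrt_le_sqrt ?_
  calc ∑ l, ‖(toLp 2 u) l‖ ^ 2 ≤ ∑ _l : Fin n, ε ^ 2 := by
        gcongr with l; simpa using hu l
    _ = n * ε ^ 2 := by simp

theorem abs_mul_mul_apply_le {X : Matrix (Fin n) (Fin n) ℝ} {δ : ℝ} (hδ : 0 ≤ δ)
    (hX : ∀ j k, |X j k| ≤ δ / n) (B : Matrix (Fin n) (Fin n) ℝ) (j k : Fin n) :
    |(X * B * X) j k| ≤ δ ^ 2 * opNorm 2 B / n := by
  have hrow := lpnorm_two_le_sqrt_mul (by positivity) (hX j)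
  have hcol := lpnorm_two_le_sqrt_mul (u := Xᵀ k) (by positivity) fun l => hX l k
  have hentry : (X * B * X) j k = X j ⬝ᵥ (B *ᵥ Xᵀ k) := by
    rw [Matrix.mul_assoc]
    simp only [mul_apply, dotProduct, mulVec, transpose_apply]
  have hn : (n : ℝ) ≠ 0 := Nat.cast_ne_zero.mpr (Fin.pos j).ne'
  calc |(X * B * X) j k| ≤ lpnorm 2 (X j) * (opNorm 2 B * lpnorm 2 (Xᵀ k)) := by
        rw [hentry]
        exact (abs_dotProduct_le_lpnorm_two_mul _ _).trans
          (mul_le_mul_of_nonneg_left (lpnorm_mulVec_le B _) (lpnorm_nonneg _))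
    _ ≤ √n * (δ / n) * (opNorm 2 B * (√n * (δ / n))) :=
        mul_le_mul hrow (mul_le_mul_of_nonneg_left hcol (opNorm_nonneg B))
          (mul_nonneg (opNorm_nonneg B) (lpnorm_nonneg _)) (by positivity)
    _ = δ ^ 2 * opNorm 2 B / n := by
        field_simp
        rw [Real.sq_sqrt n.cast_nonneg]
        ring

theorem opNorm_top_one_add_le {M : Matrix (Fin n) (Fin n) ℝ} {δ : ℝ} (hδ : 0 ≤ δ)
    (hM : ∀ j k, |M j k| ≤ δ / n) : opNorm ⊤ (1 + M) ≤ 1 + δ := by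
  refine opNorm_top_le_of_sum_abs_row_le (by positivity) fun j => ?_
  have hn : (n : ℝ) ≠ 0 := Nat.cast_ne_zero.mpr (Fin.pos j).ne'
  calc ∑ k, |(1 + M) j k| ≤ ∑ k, (|(1 : Matrix (Fin n) (Fin n) ℝ) j k| + |M j k|) :=
        sum_le_sum fun k _ => abs_add_le _ _
    _ ≤ ∑ k, |(1 : Matrix (Fin n) (Fin n) ℝ) j k| + ∑ _k : Fin n, δ / n := by
        rw [sum_add_distrib]; gcongr with k; exact hM j k
    _ = 1 + δ := by simp [one_apply, apply_ite]; field_simp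

end OperatorNorm

/-- Lemma 3.2 of [Isaev2012], formula (3.8): under condition (A) the
condition numbers satisfy `μ_∞(A) = μ₁(A) ≤ c μ₂(A)`. -/
theorem condition_number_estimate (a b : ℝ) (ha : 0 < a) (hb : 0 < b) :
    ∃ c : ℝ, 0 < c ∧
      ∀ (n : ℕ) (A : Matrix (Fin n) (Fin n) ℝ), CondA a b A →
        opNorm ⊤ A * opNorm ⊤ A⁻¹ = opNorm 1 A * opNorm 1 A⁻¹ ∧
        opNorm ⊤ A * opNorm ⊤ A⁻¹ ≤ c * (opNorm 2 A * opNorm 2 A⁻¹) := by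
  refine ⟨(1 + a) * (1 + (a + a ^ 2 * b)), by positivity, ?_⟩
  rintro n A ⟨hsymm, hpd, hdiag, hoff, hinv⟩
  refine ⟨by rw [opNorm_one_eq_opNorm_top_transpose, opNorm_one_eq_opNorm_top_transpose,
    hsymm.eq, hsymm.inv.eq], ?_⟩
  rcases isEmpty_or_nonempty (Fin n) with hn | hn
  · simp [opNorm_of_isEmpty]
  set X := A - 1
  have hX : ∀ j k, |X j k| ≤ a / n := fun j k => by
    rcases eq_or_ne j k with rfl | hjk
    · simpa [X, hdiag] using div_nonneg ha.le n.cast_nonneg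
    · simpa [X, one_apply_ne hjk] using hoff j k hjk
  have hXinvX : ∀ j k, |(X * A⁻¹ * X - X) j k| ≤ (a + a ^ 2 * b) / n := fun j k =>
    calc |(X * A⁻¹ * X - X) j k| ≤ a ^ 2 * opNorm 2 A⁻¹ / n + a / n :=
          (abs_sub _ _).trans (add_le_add (abs_mul_mul_apply_le ha.le hX A⁻¹ j k) (hX j k))
      _ ≤ (a + a ^ 2 * b) / n := by rw [add_comm a, add_div]; gcongr
  have htopA : opNorm ⊤ A ≤ 1 + a := by
    simpa [X] using opNorm_top_one_add_le ha.le hX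
  have htopAinv : opNorm ⊤ A⁻¹ ≤ 1 + (a + a ^ 2 * b) := by
    rw [inv_eq_one_add_sub_one_mul_inv_mul_sub_one hpd.isUnit]
    exact opNorm_top_one_add_le (by positivity) hXinvX
  calc opNorm ⊤ A * opNorm ⊤ A⁻¹ ≤ (1 + a) * (1 + (a + a ^ 2 * b)) :=
        mul_le_mul htopA htopAinv (opNorm_nonneg _) (by positivity)
    _ ≤ (1 + a) * (1 + (a + a ^ 2 * b)) * (opNorm 2 A * opNorm 2 A⁻¹) :=
        le_mul_of_one_le_right (by positivity) (one_le_opNorm_mul_opNorm_inv hpd.isUnit)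
end
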